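/- arXiv:2412.04334 — 2 statements merged into one kernel-verified Lean document; each statement's English description precedes it below -/
import Mathlib

section
/- Let 0 < μ ≤ 1, ζ > 0, ϑ ≥ μζ, 0 < θ ≤ 1, λ > 0 and t > 0, and set m = ζ Γ(ϑ) λ t^θ / Γ(μ + ϑ). Then the second factorial structure of the fractional counting process gives ∑_{n=0}^∞ n² · P(n,t) = m + m² (1 + 1/ζ) · B(μ+ϑ, μ+ϑ) / B(2μ+ϑ, ϑ); equivalently, the variance ∑_{n} n² P(n,t) − (∑_{n} n P(n,t))² equals m + m² { (1 + 1/ζ) B(μ+ϑ, μ+ϑ)/B(2μ+ϑ, ϑ) − 1 }, where B(a,b) = Γ(a)Γ(b)/Γ(a+b) is the Beta function. -/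
open Real

/-- Rising factorial (Pochhammer symbol) `(ζ)_n = Γ(ζ+n)/Γ(ζ)`. -/
noncomputable def risingFactorial (ζ : ℝ) (n : ℕ) : ℝ :=
  Real.Gamma (ζ + n) / Real.Gamma ζ

/-- Probability function of the fractional counting process. -/
noncomputable def fcpP (μ ϑ ζ θ lam : ℝ) (n : ℕ) (t : ℝ) : ℝ :=
  risingFactorial ζ n * Real.Gamma ϑ * (lam * t ^ θ) ^ n / n.factorial *
    ∑' k : ℕ, risingFactorial (ζ + n) k * (-(lam * t ^ θ)) ^ k /
      (k.factorial * Real.Gamma (μ * (n + k : ℕ) + ϑ))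

/-- Beta function `B(a,b) = Γ(a)Γ(b)/Γ(a+b)`. -/
noncomputable def betaFn (a b : ℝ) : ℝ :=
  Real.Gamma a * Real.Gamma b / Real.Gamma (a + b)

/-!
The factorial moments are explicit: with `x = λ t^θ`,
`∑ₙ n(n-1)⋯(n-r+1) P(n,t) = Γ(ϑ) (ζ)_r x^r / Γ(μr + ϑ)`.
Writing `n = j + r` and expanding `P(n,t)` by its defining series turns the left side into
`Γ(ϑ) (ζ)_r x^r` times a double series over `(j, k)`, which is the binomial expansion of the
Prabhakar series `E^{ζ+r}_{μ,μr+ϑ}` at `x + (-x) = 0`; its value is `1 / Γ(μr + ϑ)`.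
The regrouping is licensed by absolute convergence, which holds because `1 / Γ(μN + c)` decays
faster than any geometric sequence. The cases `r = 1, 2` give the first two moments, and
`Γ(2μ + 2ϑ)` cancels in the quotient of Beta functions.
-/

open scoped Nat

section RisingFactorial

variable {ζ : ℝ}

lemma risingFactorial_zero (hζ : 0 < ζ) : risingFactorial ζ 0 = 1 := by
  simp [risingFactorial, (Gamma_pos_of_pos hζ).ne']

lemma risingFactorial_pos (hζ : 0 < ζ) (n : ℕ) : 0 < risingFactorial ζ n :=
  div_pos (Gamma_pos_of_pos (by positivity)) (Gamma_pos_of_pos hζ)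

lemma risingFactorial_add (hζ : 0 < ζ) (a b : ℕ) :
    risingFactorial ζ (a + b) = risingFactorial ζ a * risingFactorial (ζ + a) b := by
  have hΓ : Gamma (ζ + a) ≠ 0 := (Gamma_pos_of_pos (by positivity)).ne'
  rw [risingFactorial, risingFactorial, risingFactorial, Nat.cast_add, ← add_assoc]
  field_simp

lemma risingFactorial_one (hζ : 0 < ζ) : risingFactorial ζ 1 = ζ := by
  rw [risingFactorial, Nat.cast_one, Gamma_add_one hζ.ne',
    mul_div_cancel_right₀ _ (Gamma_pos_of_pos hζ).ne']

lemma risingFactorial_succ (hζ : 0 < ζ) (n : ℕ) :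
    risingFactorial ζ (n + 1) = risingFactorial ζ n * (ζ + n) := by
  rw [risingFactorial_add hζ, risingFactorial_one (by positivity)]

lemma risingFactorial_two (hζ : 0 < ζ) : risingFactorial ζ 2 = ζ * (ζ + 1) := by
  simpa [risingFactorial_one hζ] using risingFactorial_succ hζ 1

lemma risingFactorial_le_pow_mul_factorial (hζ : 0 < ζ) (n : ℕ) :
    risingFactorial ζ n ≤ (ζ + 1) ^ n * n ! := by
  induction n with
  | zero => simp [risingFactorial_zero hζ]
  | succ n ih =>
    rw [risingFactorial_succ hζ, pow_succ, Nat.factorial_succ, Nat.cast_mul, Nat.cast_succ]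
    have hle : ζ + n ≤ (ζ + 1) * (n + 1) := by nlinarith [(n.cast_nonneg : (0 : ℝ) ≤ n)]
    calc risingFactorial ζ n * (ζ + n) ≤ (ζ + 1) ^ n * n ! * ((ζ + 1) * (n + 1)) :=
          mul_le_mul ih hle (by positivity) (by positivity)
      _ = _ := by ring

end RisingFactorial

open MeasureTheory in
lemma exp_neg_mul_rpow_le_Gamma {y T : ℝ} (hy : 1 ≤ y) (hT : 0 ≤ T) :
    exp (-(T + 1)) * T ^ (y - 1) ≤ Gamma y := by
  have hint := GammaIntegral_convergent (by linarith : 0 < y)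
  have hsub : Set.Ioc T (T + 1) ⊆ Set.Ioi 0 := fun x hx => hT.trans_lt hx.1
  rw [Gamma_eq_integral (by linarith)]
  calc exp (-(T + 1)) * T ^ (y - 1)
      = exp (-(T + 1)) * T ^ (y - 1) * volume.real (Set.Ioc T (T + 1)) := by simp
    _ ≤ ∫ x in Set.Ioc T (T + 1), exp (-x) * x ^ (y - 1) := by
        refine setIntegral_ge_of_const_le_real measurableSet_Ioc (by simp)
          (fun x hx => ?_) (hint.mono_set hsub)
        gcongr
        · exact hx.2
        · exact hx.1.le
    _ ≤ ∫ x in Set.Ioi 0, exp (-x) * x ^ (y - 1) := by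
        refine setIntegral_mono_set hint ?_ hsub.eventuallyLE
        filter_upwards [ae_restrict_mem measurableSet_Ioi] with x hx
        exact mul_nonneg (exp_pos _).le (rpow_nonneg (le_of_lt hx) _)

open Filter in
theorem summable_pow_div_Gamma {μ : ℝ} (hμ : 0 < μ) (a c : ℝ) :
    Summable fun n : ℕ => a ^ n / Gamma (μ * n + c) := by
  set b := 2 * |a| + 1
  set T := b ^ μ⁻¹
  have hT : 0 < T := by positivity
  have hTμ : T ^ μ = b := by
    rw [← rpow_mul (by positivity), inv_mul_cancel₀ hμ.ne', rpow_one]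
  have hq : |a| / b < 1 := (div_lt_one (by positivity)).2 (by linarith [abs_nonneg a])
  refine Summable.of_norm_bounded_eventually_nat
    ((summable_geometric_of_lt_one (by positivity) hq).mul_left (exp (T + 1) * T ^ (1 - c))) ?_
  obtain ⟨N, hN⟩ := exists_nat_ge ((1 - c) / μ)
  filter_upwards [eventually_ge_atTop N] with n hn
  have hy : 1 ≤ μ * n + c := by
    have : (1 - c) / μ ≤ n := hN.trans (by exact_mod_cast hn)
    rw [div_le_iff₀ hμ] at this
    linarith
  have hlow := exp_neg_mul_rpow_le_Gamma hy hT.le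
  have hsplit : T ^ (μ * n + c - 1) = b ^ n * (T ^ (1 - c))⁻¹ := by
    rw [show μ * n + c - 1 = μ * n + -(1 - c) by ring, rpow_add hT, rpow_neg hT.le,
      rpow_mul hT.le, hTμ, rpow_natCast]
  have hΓ : 0 < Gamma (μ * n + c) := (by positivity : (0 : ℝ) < _).trans_le hlow
  rw [norm_div, norm_pow, norm_eq_abs, norm_of_nonneg hΓ.le]
  calc |a| ^ n / Gamma (μ * n + c) ≤ |a| ^ n / (exp (-(T + 1)) * T ^ (μ * n + c - 1)) :=
        div_le_div_of_nonneg_left (by positivity) (by positivity) hlow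
    _ = exp (T + 1) * T ^ (1 - c) * (|a| / b) ^ n := by
        rw [hsplit, exp_neg, div_pow]
        field_simp

/-- `E_{μ,ϑ}^{ζ}(z) = ∑ₙ prabhakarCoeff μ ϑ ζ n * zⁿ`. -/
noncomputable def prabhakarCoeff (μ ϑ ζ : ℝ) (n : ℕ) : ℝ :=
  risingFactorial ζ n / (n ! * Gamma (μ * n + ϑ))

theorem summable_prabhakarCoeff_mul_pow {μ ζ : ℝ} (hμ : 0 < μ) (hζ : 0 < ζ) (ϑ x : ℝ) :
    Summable fun n : ℕ => prabhakarCoeff μ ϑ ζ n * x ^ n := by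
  refine Summable.of_norm_bounded (summable_pow_div_Gamma hμ ((ζ + 1) * |x|) ϑ).abs fun n => ?_
  have hb : 0 ≤ (ζ + 1) * |x| := by positivity
  rw [prabhakarCoeff, norm_eq_abs, abs_mul, abs_div, abs_div, abs_mul, abs_pow, abs_pow,
    Nat.abs_cast, abs_of_pos (risingFactorial_pos hζ n), abs_of_nonneg hb, mul_pow]
  have hfac : (0 : ℝ) < n ! := by positivity
  calc risingFactorial ζ n / (n ! * |Gamma (μ * n + ϑ)|) * |x| ^ n
      = risingFactorial ζ n / n ! * |x| ^ n / |Gamma (μ * n + ϑ)| := by ring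
    _ ≤ (ζ + 1) ^ n * |x| ^ n / |Gamma (μ * n + ϑ)| := by
        gcongr
        exact (div_le_iff₀ hfac).2 (risingFactorial_le_pow_mul_factorial hζ n)

open Finset in
lemma hasSum_antidiagonal_choose_mul_pow (h : ℕ → ℝ) (u v : ℝ) (n : ℕ) :
    HasSum (fun p : antidiagonal n =>
        h (p.1.1 + p.1.2) * ((p.1.1 + p.1.2).choose p.1.1 * u ^ p.1.1 * v ^ p.1.2))
      (h n * (u + v) ^ n) := by
  convert hasSum_fintype _
  rw [sum_coe_sort (antidiagonal n)
      (fun p => h (p.1 + p.2) * ((p.1 + p.2).choose p.1 * u ^ p.1 * v ^ p.2)),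
    (Commute.all u v).add_pow', mul_sum]
  refine sum_congr rfl fun p hp => ?_
  rw [mem_antidiagonal.1 hp, nsmul_eq_mul, mul_assoc]

open Finset in
theorem hasSum_mul_choose_mul_pow_mul_pow {g : ℕ → ℝ} {u v : ℝ}
    (hg : Summable fun n => |g n| * (|u| + |v|) ^ n) :
    HasSum (fun p : ℕ × ℕ => g (p.1 + p.2) * ((p.1 + p.2).choose p.1 * u ^ p.1 * v ^ p.2))
      (∑' n, g n * (u + v) ^ n) := by
  set f : ℕ × ℕ → ℝ := fun p =>
    g (p.1 + p.2) * ((p.1 + p.2).choose p.1 * u ^ p.1 * v ^ p.2)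
  set e := HasAntidiagonal.sigmaAntidiagonalEquivProd (A := ℕ)
  have habs : Summable fun σ => |f (e σ)| := by
    refine (summable_sigma_of_nonneg fun _ => abs_nonneg _).2
      ⟨fun n => (hasSum_fintype _).summable, ?_⟩
    convert hg with n
    convert (hasSum_antidiagonal_choose_mul_pow (fun n => |g n|) |u| |v| n).tsum_eq using 3
    simp [f, e, abs_mul]
  have hsum := (habs.of_abs).hasSum
  rw [(hsum.sigma fun n => hasSum_antidiagonal_choose_mul_pow g u v n).tsum_eq]
  exact e.hasSum_iff.1 hsum

-- The Prabhakar series at `x + (-x) = 0`, expanded binomially.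
theorem hasSum_prabhakarCoeff_mul_choose_mul_pow_neg {μ ζ : ℝ} (hμ : 0 < μ) (hζ : 0 < ζ)
    (ϑ x : ℝ) :
    HasSum (fun p : ℕ × ℕ =>
        prabhakarCoeff μ ϑ ζ (p.1 + p.2) * ((p.1 + p.2).choose p.1 * x ^ p.1 * (-x) ^ p.2))
      (1 / Gamma ϑ) := by
  have hg : Summable fun n => |prabhakarCoeff μ ϑ ζ n| * (|x| + |-x|) ^ n := by
    refine (summable_prabhakarCoeff_mul_pow hμ hζ ϑ (|x| + |-x|)).abs.congr fun n => ?_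
    rw [abs_mul, abs_of_nonneg (by positivity : (0 : ℝ) ≤ (|x| + |-x|) ^ n)]
  convert hasSum_mul_choose_mul_pow_mul_pow hg using 1
  rw [add_neg_cancel, tsum_eq_single 0 fun n hn => by simp [hn]]
  simp [prabhakarCoeff, risingFactorial_zero hζ]

theorem descFactorial_mul_fcpP_add {μ ϑ ζ : ℝ} (hζ : 0 < ζ) (θ lam t : ℝ) (r j : ℕ) :
    ((j + r).descFactorial r : ℝ) * fcpP μ ϑ ζ θ lam (j + r) t =
      Gamma ϑ * risingFactorial ζ r * (lam * t ^ θ) ^ r *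
        ∑' k, prabhakarCoeff μ (μ * r + ϑ) (ζ + r) (j + k) *
          ((j + k).choose j * (lam * t ^ θ) ^ j * (-(lam * t ^ θ)) ^ k) := by
  rw [fcpP, ← tsum_mul_left, ← tsum_mul_left, ← tsum_mul_left]
  refine tsum_congr fun k => ?_
  have hdesc : ((j + r).descFactorial r : ℝ) * j ! = (j + r)! := by
    exact_mod_cast Nat.add_sub_cancel j r ▸ Nat.mul_comm _ _ ▸
      Nat.factorial_mul_descFactorial (Nat.le_add_left r j)
  have hchoose : ((j + k).choose j : ℝ) * j ! * k ! = (j + k)! := by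
    exact_mod_cast Nat.add_sub_cancel_left j k ▸
      Nat.choose_mul_factorial_mul_factorial (Nat.le_add_right j k)
  have hchoose0 : ((j + k).choose j : ℝ) ≠ 0 := by
    exact_mod_cast (Nat.choose_pos (Nat.le_add_right j k)).ne'
  have hrf : risingFactorial ζ (j + r) = risingFactorial ζ r * risingFactorial (ζ + r) j := by
    rw [Nat.add_comm]
    exact risingFactorial_add hζ r j
  have harg : μ * ((j + r + k : ℕ) : ℝ) + ϑ = μ * ((j + k : ℕ) : ℝ) + (μ * r + ϑ) := by
    push_cast
    ring
  rw [prabhakarCoeff, hrf, risingFactorial_add (by positivity) j k, harg,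
    show ζ + ((j + r : ℕ) : ℝ) = ζ + r + j by push_cast; ring, ← hdesc, ← hchoose]
  field_simp
  ring

open Finset in
theorem hasSum_descFactorial_mul_fcpP {μ ζ : ℝ} (hμ : 0 < μ) (hζ : 0 < ζ)
    (ϑ θ lam t : ℝ) (r : ℕ) :
    HasSum (fun n : ℕ => (n.descFactorial r : ℝ) * fcpP μ ϑ ζ θ lam n t)
      (Gamma ϑ * risingFactorial ζ r * (lam * t ^ θ) ^ r / Gamma (μ * r + ϑ)) := by
  have hdouble := hasSum_prabhakarCoeff_mul_choose_mul_pow_neg hμ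
    (by positivity : 0 < ζ + r) (μ * r + ϑ) (lam * t ^ θ)
  have hcols := (hdouble.prod_fiberwise fun j => (hdouble.summable.prod_factor j).hasSum).mul_left
    (Gamma ϑ * risingFactorial ζ r * (lam * t ^ θ) ^ r)
  refine (hasSum_nat_add_iff' r).1 ?_
  rw [sum_eq_zero fun i hi => by simp [Nat.descFactorial_eq_zero_iff_lt.2 (mem_range.1 hi)],
    sub_zero, div_eq_mul_one_div]
  simpa only [← descFactorial_mul_fcpP_add hζ] using hcols

theorem hasSum_mul_fcpP {μ ζ : ℝ} (hμ : 0 < μ) (hζ : 0 < ζ) (ϑ θ lam t : ℝ) :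
    HasSum (fun n : ℕ => (n : ℝ) * fcpP μ ϑ ζ θ lam n t)
      (ζ * Gamma ϑ * lam * t ^ θ / Gamma (μ + ϑ)) := by
  convert hasSum_descFactorial_mul_fcpP hμ hζ ϑ θ lam t 1 using 1
  · simp
  · rw [risingFactorial_one hζ]
    ring_nf

theorem hasSum_sq_mul_fcpP {μ ζ : ℝ} (hμ : 0 < μ) (hζ : 0 < ζ) (ϑ θ lam t : ℝ) :
    HasSum (fun n : ℕ => (n : ℝ) ^ 2 * fcpP μ ϑ ζ θ lam n t)
      (Gamma ϑ * (ζ * (ζ + 1)) * (lam * t ^ θ) ^ 2 / Gamma (2 * μ + ϑ) +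
        ζ * Gamma ϑ * lam * t ^ θ / Gamma (μ + ϑ)) := by
  convert (hasSum_descFactorial_mul_fcpP hμ hζ ϑ θ lam t 2).add
    (hasSum_mul_fcpP hμ hζ ϑ θ lam t) using 1
  · funext n
    rw [← add_mul, Nat.cast_descFactorial_two]
    ring
  · rw [risingFactorial_two hζ]
    ring_nf

lemma betaFn_div_betaFn_of_add_eq {a b c d : ℝ} (h : a + b = c + d) (hΓ : Gamma (a + b) ≠ 0) :
    betaFn a b / betaFn c d = Gamma a * Gamma b / (Gamma c * Gamma d) := by
  rw [betaFn, betaFn, ← h]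
  field_simp

theorem fcp_second_moment_and_variance_general (μ ϑ ζ θ lam t : ℝ) (hμ : 0 < μ)
    (hζ : 0 < ζ) (hϑ : μ * ζ ≤ ϑ)
    (m : ℝ) (hm : m = ζ * Real.Gamma ϑ * lam * t ^ θ / Real.Gamma (μ + ϑ)) :
    (∑' n : ℕ, (n : ℝ) ^ 2 * fcpP μ ϑ ζ θ lam n t
      = m + m ^ 2 * (1 + 1 / ζ) * (betaFn (μ + ϑ) (μ + ϑ) / betaFn (2 * μ + ϑ) ϑ)) ∧
    ((∑' n : ℕ, (n : ℝ) ^ 2 * fcpP μ ϑ ζ θ lam n t)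
        - (∑' n : ℕ, (n : ℝ) * fcpP μ ϑ ζ θ lam n t) ^ 2
      = m + m ^ 2 * ((1 + 1 / ζ) * (betaFn (μ + ϑ) (μ + ϑ) / betaFn (2 * μ + ϑ) ϑ) - 1)) := by
  have hϑ0 : 0 < ϑ := (mul_pos hμ hζ).trans_le hϑ
  have hΓ : ∀ {y}, 0 < y → Gamma y ≠ 0 := fun hy => (Gamma_pos_of_pos hy).ne'
  have hB := betaFn_div_betaFn_of_add_eq (show (μ + ϑ) + (μ + ϑ) = (2 * μ + ϑ) + ϑ by ring)
    (hΓ (by positivity))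
  have hsecond : ∑' n : ℕ, (n : ℝ) ^ 2 * fcpP μ ϑ ζ θ lam n t
      = m + m ^ 2 * (1 + 1 / ζ) * (betaFn (μ + ϑ) (μ + ϑ) / betaFn (2 * μ + ϑ) ϑ) := by
    have := hΓ hϑ0
    have := hΓ (by positivity : 0 < μ + ϑ)
    have := hΓ (by positivity : 0 < 2 * μ + ϑ)
    rw [(hasSum_sq_mul_fcpP hμ hζ ϑ θ lam t).tsum_eq, hB, hm]
    field_simp
    ring
  refine ⟨hsecond, ?_⟩
  rw [hsecond, (hasSum_mul_fcpP hμ hζ ϑ θ lam t).tsum_eq, ← hm]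
  ring

/-- Second moment and variance of the fractional counting process. With
`m = ζ Γ(ϑ) λ t^θ / Γ(μ+ϑ)` one has
`∑_n n² P(n,t) = m + m² (1+1/ζ) B(μ+ϑ,μ+ϑ)/B(2μ+ϑ,ϑ)`, and equivalently the
variance equals `m + m² {(1+1/ζ) B(μ+ϑ,μ+ϑ)/B(2μ+ϑ,ϑ) − 1}`. -/
theorem fcp_second_moment_and_variance (μ ϑ ζ θ lam t : ℝ) (hμ : 0 < μ) (hμ1 : μ ≤ 1)
    (hζ : 0 < ζ) (hϑ : μ * ζ ≤ ϑ) (hθ : 0 < θ) (hθ1 : θ ≤ 1) (hlam : 0 < lam) (ht : 0 < t)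
    (m : ℝ) (hm : m = ζ * Real.Gamma ϑ * lam * t ^ θ / Real.Gamma (μ + ϑ)) :
    (∑' n : ℕ, (n : ℝ) ^ 2 * fcpP μ ϑ ζ θ lam n t
      = m + m ^ 2 * (1 + 1 / ζ) * (betaFn (μ + ϑ) (μ + ϑ) / betaFn (2 * μ + ϑ) ϑ)) ∧
    ((∑' n : ℕ, (n : ℝ) ^ 2 * fcpP μ ϑ ζ θ lam n t)
        - (∑' n : ℕ, (n : ℝ) * fcpP μ ϑ ζ θ lam n t) ^ 2
      = m + m ^ 2 * ((1 + 1 / ζ) * (betaFn (μ + ϑ) (μ + ϑ) / betaFn (2 * μ + ϑ) ϑ) - 1)) :=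
  fcp_second_moment_and_variance_general μ ϑ ζ θ lam t hμ hζ hϑ m hm
end

section
/- Let 0 < μ ≤ 1, ζ > 0, ϑ ≥ μζ, 0 < θ ≤ 1, λ > 0, let (Ω, F, ℙ) be a probability space and H : Ω → [0,∞) a random variable with 𝔼[E_{μ,ϑ}^{ζ}(2λ H^θ)] < ∞. Then for every s ≥ 0, the Laplace transform of the TCFCP satisfies ∑_{n=0}^∞ e^{−sn} · z(n) = Γ(ϑ) ∑_{m=0}^∞ ( (ζ)_m (λ(e^{−s} − 1))^m / (m! Γ(μm+ϑ)) ) · 𝔼[H^{mθ}], where z(n) = 𝔼[P(n,H)] and all series converge absolutely. -/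
open Real MeasureTheory
open scoped ENNReal NNReal

set_option maxHeartbeats 1000000

/-- Three-parameter (Prabhakar) Mittag-Leffler function. -/
noncomputable def mittagLeffler (μ ϑ ζ z : ℝ) : ℝ :=
  ∑' m : ℕ, risingFactorial ζ m * z ^ m / (m.factorial * Real.Gamma (μ * m + ϑ))

lemma rf_pos {ζ : ℝ} (hζ : 0 < ζ) (n : ℕ) : 0 < risingFactorial ζ n :=
  div_pos (Real.Gamma_pos_of_pos (by positivity)) (Real.Gamma_pos_of_pos hζ)

lemma rf_mul {ζ : ℝ} (hζ : 0 < ζ) (n k : ℕ) :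
    risingFactorial ζ n * risingFactorial (ζ + n) k = risingFactorial ζ (n + k) := by
  unfold risingFactorial
  have h1 : Real.Gamma ζ ≠ 0 := (Real.Gamma_pos_of_pos hζ).ne'
  have h2 : Real.Gamma (ζ + n) ≠ 0 := (Real.Gamma_pos_of_pos (by positivity)).ne'
  have h3 : ζ + (n + k : ℕ) = ζ + n + k := by push_cast; ring
  rw [h3]
  field_simp

lemma rf_succ {ζ : ℝ} (hζ : 0 < ζ) (m : ℕ) :
    risingFactorial ζ (m + 1) = risingFactorial ζ m * (ζ + m) := by
  unfold risingFactorial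
  have h : ζ + (m : ℝ) ≠ 0 := by positivity
  have h3 : ζ + ((m + 1 : ℕ) : ℝ) = (ζ + m) + 1 := by push_cast; ring
  rw [h3, Real.Gamma_add_one h]
  ring

lemma gamma_ratio {μ : ℝ} (hμ : 0 < μ) (hμ1 : μ ≤ 1) {x : ℝ} (hx : 0 < x) :
    x * Real.Gamma x ≤ Real.Gamma (x + μ) * (x + μ) ^ (1 - μ) := by
  have hxμ : 0 < x + μ := by linarith
  have hxμ1 : 0 < x + μ + 1 := by linarith
  have hkey := Real.convexOn_log_Gamma.2 (Set.mem_Ioi.mpr hxμ) (Set.mem_Ioi.mpr hxμ1)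
    hμ.le (by linarith : (0:ℝ) ≤ 1 - μ) (by ring)
  have hcomb : μ • (x + μ) + (1 - μ) • (x + μ + 1) = x + 1 := by
    simp only [smul_eq_mul]; ring
  rw [hcomb] at hkey
  simp only [Function.comp, smul_eq_mul] at hkey
  have hG1 : Real.Gamma (x + μ + 1) = (x + μ) * Real.Gamma (x + μ) :=
    Real.Gamma_add_one hxμ.ne'
  rw [hG1, Real.log_mul hxμ.ne' (Real.Gamma_pos_of_pos hxμ).ne'] at hkey
  have hkey2 : Real.log (Real.Gamma (x + 1)) ≤
      Real.log (Real.Gamma (x + μ)) + (1 - μ) * Real.log (x + μ) := by nlinarith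
  have h4 : Real.Gamma (x + 1) ≤ Real.Gamma (x + μ) * (x + μ) ^ (1 - μ) := by
    have := Real.exp_le_exp.mpr hkey2
    rw [Real.exp_log (Real.Gamma_pos_of_pos (by linarith : (0:ℝ) < x + 1)),
      Real.exp_add, Real.exp_log (Real.Gamma_pos_of_pos hxμ)] at this
    rwa [Real.rpow_def_of_pos hxμ, mul_comm (Real.log (x + μ))]
  rwa [Real.Gamma_add_one hx.ne'] at h4

set_option maxHeartbeats 1000000 in
lemma ml_summable {μ ϑ ζ : ℝ} (hμ : 0 < μ) (hμ1 : μ ≤ 1) (hζ : 0 < ζ) (hϑ : 0 < ϑ)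
    {y : ℝ} (hy : 0 ≤ y) :
    Summable fun m : ℕ => risingFactorial ζ m * y ^ m /
      (m.factorial * Real.Gamma (μ * m + ϑ)) := by
  refine summable_of_ratio_norm_eventually_le (r := 1/2) (by norm_num) ?_
  have hinf : Filter.Tendsto (fun m : ℕ => μ * m + ϑ) Filter.atTop Filter.atTop := by
    apply Filter.tendsto_atTop_add_const_right
    exact (tendsto_natCast_atTop_atTop (R := ℝ)).const_mul_atTop hμ
  have hE2 : ∀ᶠ m : ℕ in Filter.atTop, 4 * (ζ + 1) * y ≤ (μ * m + ϑ) ^ μ :=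
    ((tendsto_rpow_atTop hμ).comp hinf).eventually_ge_atTop _
  have hE1 : ∀ᶠ m : ℕ in Filter.atTop, (1:ℝ) ≤ μ * m + ϑ := hinf.eventually_ge_atTop _
  filter_upwards [hE1, hE2] with m h1 h2
  set x : ℝ := μ * m + ϑ with hxdef
  have hx : (0:ℝ) < x := by linarith
  have hxμ : (0:ℝ) < x + μ := by linarith
  have hΓx : 0 < Real.Gamma x := Real.Gamma_pos_of_pos hx
  have hΓxμ : 0 < Real.Gamma (x + μ) := Real.Gamma_pos_of_pos hxμ
  have hrf := rf_pos hζ m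
  have hrf1 := rf_pos hζ (m + 1)
  have hfac : (0:ℝ) < m.factorial := by positivity
  have hfac1 : (0:ℝ) < (m + 1 : ℕ).factorial := by positivity
  have hx1 : μ * ((m : ℝ) + 1) + ϑ = x + μ := by rw [hxdef]; ring
  -- step1 : 2 * (ζ + m) * y * (x + μ) ^ (1 - μ) ≤ (m + 1) * x
  have hA2B : (x + μ) ^ (1 - μ) ≤ 2 * x ^ (1 - μ) := by
    calc (x + μ) ^ (1 - μ) ≤ (2 * x) ^ (1 - μ) :=
          Real.rpow_le_rpow hxμ.le (by linarith) (by linarith)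
      _ = 2 ^ (1 - μ) * x ^ (1 - μ) := Real.mul_rpow (by norm_num) hx.le
      _ ≤ 2 * x ^ (1 - μ) := by
          have h21 : (2:ℝ) ^ (1 - μ) ≤ 2 ^ (1:ℝ) :=
            Real.rpow_le_rpow_of_exponent_le one_le_two (by linarith)
          rw [Real.rpow_one] at h21
          have := Real.rpow_nonneg hx.le (1 - μ)
          nlinarith
  have hBC : x ^ (1 - μ) * x ^ μ = x := by
    rw [← Real.rpow_add hx]; norm_num
  have hB0 : (0:ℝ) ≤ x ^ (1 - μ) := Real.rpow_nonneg hx.le _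
  have hA0 : (0:ℝ) ≤ (x + μ) ^ (1 - μ) := Real.rpow_nonneg hxμ.le _
  have step1 : 2 * (ζ + m) * y * (x + μ) ^ (1 - μ) ≤ ((m : ℝ) + 1) * x := by
    have hc0 : (0:ℝ) ≤ 2 * (ζ + m) * y :=
      mul_nonneg (by positivity) hy
    have c1 : 2 * (ζ + m) * y * (x + μ) ^ (1 - μ) ≤ 4 * (ζ + m) * y * x ^ (1 - μ) := by
      nlinarith [mul_le_mul_of_nonneg_left hA2B hc0]
    have c2 : 4 * (ζ + (m:ℝ)) * y ≤ ((m:ℝ) + 1) * (4 * (ζ + 1) * y) := by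
      nlinarith [mul_nonneg hy (mul_nonneg hζ.le (Nat.cast_nonneg m : (0:ℝ) ≤ m))]
    have c3 : 4 * (ζ + (m:ℝ)) * y * x ^ (1 - μ) ≤ ((m:ℝ) + 1) * x ^ μ * x ^ (1 - μ) := by
      have : 4 * (ζ + (m:ℝ)) * y ≤ ((m:ℝ) + 1) * x ^ μ := by nlinarith
      exact mul_le_mul_of_nonneg_right this hB0
    calc 2 * (ζ + m) * y * (x + μ) ^ (1 - μ) ≤ 4 * (ζ + (m:ℝ)) * y * x ^ (1 - μ) := c1
      _ ≤ ((m:ℝ) + 1) * x ^ μ * x ^ (1 - μ) := c3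
      _ = ((m:ℝ) + 1) * x := by rw [mul_assoc, mul_comm (x ^ μ), hBC]
  -- step2 : 2 * (ζ + m) * y * Real.Gamma x ≤ ((m:ℝ)+1) * Real.Gamma (x + μ)
  have step2 : 2 * (ζ + m) * y * Real.Gamma x ≤ ((m : ℝ) + 1) * Real.Gamma (x + μ) := by
    have hg := gamma_ratio hμ hμ1 hx
    have hApos : (0:ℝ) < (x + μ) ^ (1 - μ) := Real.rpow_pos_of_pos hxμ _
    rw [← mul_le_mul_iff_of_pos_right hApos]
    calc 2 * (ζ + m) * y * Real.Gamma x * (x + μ) ^ (1 - μ)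
        = (2 * (ζ + m) * y * (x + μ) ^ (1 - μ)) * Real.Gamma x := by ring
      _ ≤ (((m:ℝ) + 1) * x) * Real.Gamma x := mul_le_mul_of_nonneg_right step1 hΓx.le
      _ = ((m:ℝ) + 1) * (x * Real.Gamma x) := by ring
      _ ≤ ((m:ℝ) + 1) * (Real.Gamma (x + μ) * (x + μ) ^ (1 - μ)) :=
          mul_le_mul_of_nonneg_left hg (by positivity)
      _ = ((m:ℝ) + 1) * Real.Gamma (x + μ) * (x + μ) ^ (1 - μ) := by ring
  -- conclude
  have hnum : risingFactorial ζ (m + 1) * y ^ (m + 1) = risingFactorial ζ m * (ζ + m) * (y ^ m * y) := by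
    rw [rf_succ hζ m]; ring
  rw [Real.norm_eq_abs, Real.norm_eq_abs,
    abs_of_nonneg (by positivity), abs_of_nonneg (by positivity)]
  have hrw : (1:ℝ)/2 * (risingFactorial ζ m * y ^ m / ((m.factorial : ℝ) * Real.Gamma x)) =
      risingFactorial ζ m * y ^ m / (2 * ((m.factorial : ℝ) * Real.Gamma x)) := by ring
  rw [hrw, div_le_div_iff₀ (by positivity) (by positivity)]
  have hGrw : μ * (((m + 1 : ℕ) : ℝ)) + ϑ = x + μ := by push_cast; rw [hxdef]; ring
  rw [hGrw, hnum, Nat.factorial_succ]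
  push_cast
  have hyb : (0:ℝ) ≤ y ^ m := by positivity
  nlinarith [mul_le_mul_of_nonneg_left step2 (mul_nonneg (mul_nonneg hrf.le hyb) hfac.le)]

lemma ml_summable_abs {μ ϑ ζ : ℝ} (hμ : 0 < μ) (hμ1 : μ ≤ 1) (hζ : 0 < ζ) (hϑ : 0 < ϑ)
    (y : ℝ) :
    Summable fun m : ℕ => risingFactorial ζ m * y ^ m /
      (m.factorial * Real.Gamma (μ * m + ϑ)) := by
  refine Summable.of_abs ?_
  have habs : ∀ m : ℕ, |risingFactorial ζ m * y ^ m / (m.factorial * Real.Gamma (μ * m + ϑ))|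
      = risingFactorial ζ m * |y| ^ m / (m.factorial * Real.Gamma (μ * m + ϑ)) := by
    intro m
    have hΓ : (0:ℝ) < Real.Gamma (μ * m + ϑ) := Real.Gamma_pos_of_pos (by positivity)
    rw [abs_div, abs_mul, abs_pow, abs_of_pos (rf_pos hζ m),
      abs_of_pos (by positivity : (0:ℝ) < (m.factorial : ℝ) * Real.Gamma (μ * m + ϑ))]
  simpa only [habs] using ml_summable hμ hμ1 hζ hϑ (abs_nonneg y)

lemma antidiag_sum (u v : ℝ) (m : ℕ) :
    ∑ p ∈ Finset.HasAntidiagonal.antidiagonal m, u ^ p.1 * v ^ p.2 / (p.1.factorial * p.2.factorial)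
      = (u + v) ^ m / m.factorial := by
  rw [Finset.Nat.sum_antidiagonal_eq_sum_range_succ_mk, add_pow, Finset.sum_div]
  refine Finset.sum_congr rfl fun k hk => ?_
  have hk' : k ≤ m := Nat.lt_succ_iff.mp (Finset.mem_range.mp hk)
  rw [Nat.cast_choose ℝ hk']
  have h1 : (k.factorial : ℝ) ≠ 0 := by positivity
  have h2 : (((m - k).factorial : ℕ) : ℝ) ≠ 0 := by positivity
  have h3 : ((m.factorial : ℕ) : ℝ) ≠ 0 := by positivity
  field_simp

/-- The double-array whose rows are the terms of `e^{-sn} P(n,t)`. -/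
noncomputable def dArr (μ ϑ ζ w v : ℝ) (p : ℕ × ℕ) : ℝ :=
  Real.Gamma ϑ * risingFactorial ζ (p.1 + p.2) * w ^ p.1 * v ^ p.2 /
    ((p.1.factorial : ℝ) * p.2.factorial * Real.Gamma (μ * ((p.1 + p.2 : ℕ) : ℝ) + ϑ))

lemma dArr_abs {μ ϑ ζ : ℝ} (hμ : 0 < μ) (hζ : 0 < ζ) (hϑ : 0 < ϑ) (w v : ℝ) (p : ℕ × ℕ) :
    |dArr μ ϑ ζ w v p| = dArr μ ϑ ζ |w| |v| p := by
  unfold dArr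
  have hΓ : (0:ℝ) < Real.Gamma (μ * ((p.1 + p.2 : ℕ) : ℝ) + ϑ) :=
    Real.Gamma_pos_of_pos (by positivity)
  rw [abs_div, abs_mul, abs_mul, abs_mul, abs_pow, abs_pow,
    abs_of_pos (Real.Gamma_pos_of_pos hϑ), abs_of_pos (rf_pos hζ _),
    abs_of_pos (by positivity : (0:ℝ) < (p.1.factorial : ℝ) * p.2.factorial *
      Real.Gamma (μ * ((p.1 + p.2 : ℕ) : ℝ) + ϑ))]

lemma dArr_fiber_sum {μ ϑ ζ : ℝ} (w v : ℝ) (m : ℕ) :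
    ∑ p ∈ Finset.HasAntidiagonal.antidiagonal m, dArr μ ϑ ζ w v p
      = Real.Gamma ϑ * (risingFactorial ζ m * (w + v) ^ m /
          (m.factorial * Real.Gamma (μ * m + ϑ))) := by
  have h : ∀ p ∈ Finset.HasAntidiagonal.antidiagonal m, dArr μ ϑ ζ w v p
      = (Real.Gamma ϑ * risingFactorial ζ m / Real.Gamma (μ * m + ϑ)) *
        (w ^ p.1 * v ^ p.2 / (p.1.factorial * p.2.factorial)) := by
    intro p hp
    have hpm : p.1 + p.2 = m := Finset.HasAntidiagonal.mem_antidiagonal.mp hp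
    unfold dArr
    rw [hpm]
    ring
  rw [Finset.sum_congr rfl h, ← Finset.mul_sum, antidiag_sum]
  ring

lemma dArr_nonneg {μ ϑ ζ : ℝ} (hμ : 0 < μ) (hζ : 0 < ζ) (hϑ : 0 < ϑ) {w v : ℝ}
    (hw : 0 ≤ w) (hv : 0 ≤ v) (p : ℕ × ℕ) : 0 ≤ dArr μ ϑ ζ w v p := by
  unfold dArr
  have hΓ : (0:ℝ) < Real.Gamma (μ * ((p.1 + p.2 : ℕ) : ℝ) + ϑ) :=
    Real.Gamma_pos_of_pos (by positivity)
  have := rf_pos hζ (p.1 + p.2)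
  have := Real.Gamma_pos_of_pos hϑ
  positivity

lemma dArr_summable_nonneg {μ ϑ ζ : ℝ} (hμ : 0 < μ) (hμ1 : μ ≤ 1) (hζ : 0 < ζ) (hϑ : 0 < ϑ)
    {w v : ℝ} (hw : 0 ≤ w) (hv : 0 ≤ v) : Summable (dArr μ ϑ ζ w v) := by
  rw [← Finset.HasAntidiagonal.sigmaAntidiagonalEquivProd.summable_iff]
  have hcomp : (dArr μ ϑ ζ w v ∘ ⇑Finset.HasAntidiagonal.sigmaAntidiagonalEquivProd)
      = fun x : (Σ m : ℕ, Finset.HasAntidiagonal.antidiagonal m) =>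
          dArr μ ϑ ζ w v (Finset.HasAntidiagonal.sigmaAntidiagonalEquivProd x) := rfl
  rw [hcomp, summable_sigma_of_nonneg (fun x => dArr_nonneg hμ hζ hϑ hw hv _)]
  constructor
  · intro m
    exact (hasSum_fintype _).summable
  · have hfib : ∀ m : ℕ, (∑' (p : Finset.HasAntidiagonal.antidiagonal m),
        dArr μ ϑ ζ w v (Finset.HasAntidiagonal.sigmaAntidiagonalEquivProd ⟨m, p⟩))
        = Real.Gamma ϑ * (risingFactorial ζ m * (w + v) ^ m /
            (m.factorial * Real.Gamma (μ * m + ϑ))) := by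
      intro m
      rw [tsum_fintype]
      rw [← dArr_fiber_sum (μ := μ) (ϑ := ϑ) (ζ := ζ) w v m]
      exact Finset.sum_finset_coe _ _
    simp only [hfib]
    exact (ml_summable hμ hμ1 hζ hϑ (by positivity : (0:ℝ) ≤ w + v)).mul_left _

lemma dArr_summable {μ ϑ ζ : ℝ} (hμ : 0 < μ) (hμ1 : μ ≤ 1) (hζ : 0 < ζ) (hϑ : 0 < ϑ)
    (w v : ℝ) : Summable (dArr μ ϑ ζ w v) := by
  refine Summable.of_abs ?_
  simpa only [fun p => dArr_abs hμ hζ hϑ w v p] using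
    dArr_summable_nonneg hμ hμ1 hζ hϑ (abs_nonneg w) (abs_nonneg v)

lemma dArr_tsum {μ ϑ ζ : ℝ} (hμ : 0 < μ) (hμ1 : μ ≤ 1) (hζ : 0 < ζ) (hϑ : 0 < ϑ)
    (w v : ℝ) : ∑' p : ℕ × ℕ, dArr μ ϑ ζ w v p
      = ∑' m : ℕ, Real.Gamma ϑ * (risingFactorial ζ m * (w + v) ^ m /
          (m.factorial * Real.Gamma (μ * m + ϑ))) := by
  rw [← Finset.HasAntidiagonal.sigmaAntidiagonalEquivProd.tsum_eq (dArr μ ϑ ζ w v)]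
  have hsig : Summable (fun x : (Σ m : ℕ, Finset.HasAntidiagonal.antidiagonal m) =>
      dArr μ ϑ ζ w v (Finset.HasAntidiagonal.sigmaAntidiagonalEquivProd x)) :=
    (Finset.HasAntidiagonal.sigmaAntidiagonalEquivProd.summable_iff).mpr (dArr_summable hμ hμ1 hζ hϑ w v)
  rw [Summable.tsum_sigma hsig]
  congr 1
  funext m
  rw [tsum_fintype, ← dArr_fiber_sum (μ := μ) (ϑ := ϑ) (ζ := ζ) w v m]
  exact Finset.sum_finset_coe _ _


lemma fcp_row {μ ϑ ζ θ lam : ℝ} (hζ : 0 < ζ) (u t : ℝ) (n : ℕ) :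
    u ^ n * fcpP μ ϑ ζ θ lam n t
      = ∑' k : ℕ, dArr μ ϑ ζ (u * (lam * t ^ θ)) (-(lam * t ^ θ)) (n, k) := by
  unfold fcpP
  rw [show u ^ n * (risingFactorial ζ n * Real.Gamma ϑ * (lam * t ^ θ) ^ n / n.factorial *
      ∑' k : ℕ, risingFactorial (ζ + n) k * (-(lam * t ^ θ)) ^ k /
        (k.factorial * Real.Gamma (μ * (n + k : ℕ) + ϑ)))
    = ∑' k : ℕ, (u ^ n * (risingFactorial ζ n * Real.Gamma ϑ * (lam * t ^ θ) ^ n / n.factorial)) *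
        (risingFactorial (ζ + n) k * (-(lam * t ^ θ)) ^ k /
          (k.factorial * Real.Gamma (μ * (n + k : ℕ) + ϑ)))
    from by rw [tsum_mul_left]; ring]
  congr 1
  funext k
  unfold dArr
  rw [← rf_mul hζ n k]
  simp only [mul_pow]
  ring

section Pointwise

variable {μ ϑ ζ θ lam u t : ℝ}

lemma pm_abs_rows (hμ : 0 < μ) (hμ1 : μ ≤ 1) (hζ : 0 < ζ) (hϑ : 0 < ϑ)
    (hlam : 0 < lam) (hu0 : 0 < u) (hθ : 0 < θ) (ht : 0 ≤ t) (n : ℕ) :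
    |u ^ n * fcpP μ ϑ ζ θ lam n t|
      ≤ ∑' k : ℕ, dArr μ ϑ ζ (u * (lam * t ^ θ)) (lam * t ^ θ) (n, k) := by
  have hX : (0:ℝ) ≤ lam * t ^ θ := by positivity
  have habs : ∀ k : ℕ, |dArr μ ϑ ζ (u * (lam * t ^ θ)) (-(lam * t ^ θ)) (n, k)|
      = dArr μ ϑ ζ (u * (lam * t ^ θ)) (lam * t ^ θ) (n, k) := by
    intro k
    rw [dArr_abs hμ hζ hϑ, abs_of_nonneg (by positivity), abs_neg, abs_of_nonneg hX]
  have hrow : Summable fun k => dArr μ ϑ ζ (u * (lam * t ^ θ)) (lam * t ^ θ) (n, k) :=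
    (dArr_summable hμ hμ1 hζ hϑ _ _).prod_factor n
  rw [fcp_row hζ u t n]
  have hs2 : Summable fun k : ℕ => ‖dArr μ ϑ ζ (u * (lam * t ^ θ)) (-(lam * t ^ θ)) (n, k)‖ := by
    simpa only [Real.norm_eq_abs, habs] using hrow
  calc |∑' k : ℕ, dArr μ ϑ ζ (u * (lam * t ^ θ)) (-(lam * t ^ θ)) (n, k)|
      ≤ ∑' k : ℕ, |dArr μ ϑ ζ (u * (lam * t ^ θ)) (-(lam * t ^ θ)) (n, k)| := by
        simpa only [Real.norm_eq_abs] using norm_tsum_le_tsum_norm hs2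
    _ = ∑' k : ℕ, dArr μ ϑ ζ (u * (lam * t ^ θ)) (lam * t ^ θ) (n, k) := by
        simp only [habs]

lemma pm_outer_summable (hμ : 0 < μ) (hμ1 : μ ≤ 1) (hζ : 0 < ζ) (hϑ : 0 < ϑ)
    (hlam : 0 < lam) (hu0 : 0 < u) (hθ : 0 < θ) (ht : 0 ≤ t) :
    Summable fun n : ℕ => ∑' k : ℕ, dArr μ ϑ ζ (u * (lam * t ^ θ)) (lam * t ^ θ) (n, k) := by
  have hX : (0:ℝ) ≤ lam * t ^ θ := by positivity
  have h := dArr_summable_nonneg hμ hμ1 hζ hϑ (w := u * (lam * t ^ θ)) (v := lam * t ^ θ)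
    (by positivity) hX
  exact ((summable_prod_of_nonneg (fun p => dArr_nonneg hμ hζ hϑ (by positivity) hX p)).mp h).2

lemma pm1 (hμ : 0 < μ) (hμ1 : μ ≤ 1) (hζ : 0 < ζ) (hϑ : 0 < ϑ)
    (hlam : 0 < lam) (hu0 : 0 < u) (hu1 : u ≤ 1) (hθ : 0 < θ) (ht : 0 ≤ t) :
    Summable fun n : ℕ => |u ^ n * fcpP μ ϑ ζ θ lam n t| :=
  Summable.of_nonneg_of_le (fun _ => abs_nonneg _)
    (fun n => pm_abs_rows hμ hμ1 hζ hϑ hlam hu0 hθ ht n)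
    (pm_outer_summable hμ hμ1 hζ hϑ hlam hu0 hθ ht)

lemma pm_bound (hμ : 0 < μ) (hμ1 : μ ≤ 1) (hζ : 0 < ζ) (hϑ : 0 < ϑ)
    (hlam : 0 < lam) (hu0 : 0 < u) (hu1 : u ≤ 1) (hθ : 0 < θ) (ht : 0 ≤ t) :
    ∑' n : ℕ, |u ^ n * fcpP μ ϑ ζ θ lam n t|
      ≤ Real.Gamma ϑ * mittagLeffler μ ϑ ζ (2 * lam * t ^ θ) := by
  have hX : (0:ℝ) ≤ lam * t ^ θ := by positivity
  have h1 : ∑' n : ℕ, |u ^ n * fcpP μ ϑ ζ θ lam n t|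
      ≤ ∑' n : ℕ, ∑' k : ℕ, dArr μ ϑ ζ (u * (lam * t ^ θ)) (lam * t ^ θ) (n, k) :=
    Summable.tsum_le_tsum (fun n => pm_abs_rows hμ hμ1 hζ hϑ hlam hu0 hθ ht n)
      (pm1 hμ hμ1 hζ hϑ hlam hu0 hu1 hθ ht)
      (pm_outer_summable hμ hμ1 hζ hϑ hlam hu0 hθ ht)
  have h2 : ∑' n : ℕ, ∑' k : ℕ, dArr μ ϑ ζ (u * (lam * t ^ θ)) (lam * t ^ θ) (n, k)
      = ∑' m : ℕ, Real.Gamma ϑ * (risingFactorial ζ m *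
          (u * (lam * t ^ θ) + lam * t ^ θ) ^ m /
          (m.factorial * Real.Gamma (μ * m + ϑ))) := by
    rw [← Summable.tsum_prod (dArr_summable hμ hμ1 hζ hϑ _ _), dArr_tsum hμ hμ1 hζ hϑ]
  have h3 : ∑' m : ℕ, Real.Gamma ϑ * (risingFactorial ζ m *
        (u * (lam * t ^ θ) + lam * t ^ θ) ^ m /
        (m.factorial * Real.Gamma (μ * m + ϑ)))
      ≤ ∑' m : ℕ, Real.Gamma ϑ * (risingFactorial ζ m * (2 * lam * t ^ θ) ^ m /
          (m.factorial * Real.Gamma (μ * m + ϑ))) := by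
    refine Summable.tsum_le_tsum (fun m => ?_)
      ((ml_summable hμ hμ1 hζ hϑ (by positivity)).mul_left _)
      ((ml_summable hμ hμ1 hζ hϑ (by positivity : (0:ℝ) ≤ 2 * lam * t ^ θ)).mul_left _)
    have hΓ : (0:ℝ) < Real.Gamma (μ * m + ϑ) := Real.Gamma_pos_of_pos (by positivity)
    have hpow : (u * (lam * t ^ θ) + lam * t ^ θ) ^ m ≤ (2 * lam * t ^ θ) ^ m := by
      apply pow_le_pow_left₀ (by positivity)
      nlinarith
    have := rf_pos hζ m
    have hG := Real.Gamma_pos_of_pos hϑ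
    apply mul_le_mul_of_nonneg_left _ hG.le
    apply div_le_div_of_nonneg_right _ (by positivity)
    · exact mul_le_mul_of_nonneg_left hpow this.le
  have h4 : ∑' m : ℕ, Real.Gamma ϑ * (risingFactorial ζ m * (2 * lam * t ^ θ) ^ m /
        (m.factorial * Real.Gamma (μ * m + ϑ)))
      = Real.Gamma ϑ * mittagLeffler μ ϑ ζ (2 * lam * t ^ θ) := by
    rw [mittagLeffler, ← tsum_mul_left]
  linarith
end Pointwise

section Pointwise2
variable {μ ϑ ζ θ lam u t : ℝ}

lemma pm2 (hμ : 0 < μ) (hμ1 : μ ≤ 1) (hζ : 0 < ζ) (hϑ : 0 < ϑ)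
    (hlam : 0 < lam) (hu0 : 0 < u) (hθ : 0 < θ) (ht : 0 ≤ t) :
    ∑' n : ℕ, u ^ n * fcpP μ ϑ ζ θ lam n t
      = ∑' m : ℕ, Real.Gamma ϑ * (risingFactorial ζ m *
          ((lam * (u - 1)) ^ m * t ^ ((m : ℝ) * θ)) /
          (m.factorial * Real.Gamma (μ * m + ϑ))) := by
  have hsum := dArr_summable hμ hμ1 hζ hϑ (u * (lam * t ^ θ)) (-(lam * t ^ θ))
  have h1 : ∑' n : ℕ, u ^ n * fcpP μ ϑ ζ θ lam n t
      = ∑' p : ℕ × ℕ, dArr μ ϑ ζ (u * (lam * t ^ θ)) (-(lam * t ^ θ)) p := by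
    rw [Summable.tsum_prod hsum]
    exact tsum_congr fun n => fcp_row hζ u t n
  rw [h1, dArr_tsum hμ hμ1 hζ hϑ]
  refine tsum_congr fun m => ?_
  congr 2
  rw [show u * (lam * t ^ θ) + -(lam * t ^ θ) = (lam * (u - 1)) * t ^ θ from by ring,
    mul_pow]
  congr 1
  rw [← Real.rpow_natCast (t ^ θ) m, ← Real.rpow_mul ht, mul_comm θ (m : ℝ)]

end Pointwise2

lemma fcpP_inner_summable {μ ϑ ζ : ℝ} (hμ : 0 < μ) (hμ1 : μ ≤ 1) (hζ : 0 < ζ) (hϑ : 0 < ϑ)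
    (n : ℕ) (y : ℝ) :
    Summable fun k : ℕ => risingFactorial (ζ + n) k * y ^ k /
      (k.factorial * Real.Gamma (μ * (n + k : ℕ) + ϑ)) := by
  have h := ml_summable_abs (μ := μ) (ϑ := μ * n + ϑ) (ζ := ζ + n) hμ hμ1
    (by positivity) (by positivity) y
  refine h.congr fun k => ?_
  congr 2
  push_cast
  ring

lemma fcpP_measurable {μ ϑ ζ θ lam : ℝ} (hμ : 0 < μ) (hμ1 : μ ≤ 1) (hζ : 0 < ζ) (hϑ : 0 < ϑ)
    (hθ : 0 ≤ θ) (n : ℕ) : Measurable fun t : ℝ => fcpP μ ϑ ζ θ lam n t := by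
  unfold fcpP
  have hbase : Measurable fun t : ℝ => lam * t ^ θ :=
    ((Real.continuous_rpow_const hθ).measurable).const_mul lam
  refine Measurable.mul ?_ ?_
  · exact (((hbase.pow_const n).const_mul _).div_const _)
  · have hterm : ∀ k : ℕ, Measurable fun t : ℝ =>
        risingFactorial (ζ + n) k * (-(lam * t ^ θ)) ^ k /
          (k.factorial * Real.Gamma (μ * (n + k : ℕ) + ϑ)) := fun k =>
      (((hbase.neg).pow_const k).const_mul _).div_const _
    have hpart : ∀ N : ℕ, Measurable fun t : ℝ => ∑ k ∈ Finset.range N,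
        risingFactorial (ζ + n) k * (-(lam * t ^ θ)) ^ k /
          (k.factorial * Real.Gamma (μ * (n + k : ℕ) + ϑ)) := fun N =>
      Finset.measurable_sum _ fun k _ => hterm k
    apply measurable_of_tendsto_metrizable' Filter.atTop hpart
    rw [tendsto_pi_nhds]
    intro t
    exact (fcpP_inner_summable hμ hμ1 hζ hϑ n _).hasSum.tendsto_sum_nat


/-- Laplace transform of the TCFCP:
`∑_n e^{−sn} z(n) = Γ(ϑ) ∑_m (ζ)_m (λ(e^{−s}−1))^m/(m! Γ(μm+ϑ)) 𝔼[H^{mθ}]`,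
where `z(n) = 𝔼[P(n,H)]`, all series converging absolutely. -/
theorem tcfcp_laplace {Ω : Type*} [MeasurableSpace Ω] (P : Measure Ω)
    [IsProbabilityMeasure P]
    (μ ϑ ζ θ lam : ℝ) (hμ : 0 < μ) (hμ1 : μ ≤ 1) (hζ : 0 < ζ) (hϑ : μ * ζ ≤ ϑ)
    (hθ : 0 < θ) (hθ1 : θ ≤ 1) (hlam : 0 < lam)
    (H : Ω → ℝ) (hHm : Measurable H) (hH0 : ∀ ω, 0 ≤ H ω)
    (hint : Integrable (fun ω => mittagLeffler μ ϑ ζ (2 * lam * H ω ^ θ)) P)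
    (z : ℕ → ℝ) (hz : ∀ n, z n = ∫ ω, fcpP μ ϑ ζ θ lam n (H ω) ∂P)
    (s : ℝ) (hs : 0 ≤ s) :
    (Summable fun n : ℕ => |Real.exp (-s * n) * z n|) ∧
    (Summable fun m : ℕ =>
      |risingFactorial ζ m * (lam * (Real.exp (-s) - 1)) ^ m /
          (m.factorial * Real.Gamma (μ * m + ϑ)) *
        ∫ ω, H ω ^ ((m : ℝ) * θ) ∂P|) ∧
    (∑' n : ℕ, Real.exp (-s * n) * z n
      = Real.Gamma ϑ * ∑' m : ℕ,
          risingFactorial ζ m * (lam * (Real.exp (-s) - 1)) ^ m /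
            (m.factorial * Real.Gamma (μ * m + ϑ)) *
          ∫ ω, H ω ^ ((m : ℝ) * θ) ∂P) := by

  have hϑ0 : 0 < ϑ := lt_of_lt_of_le (mul_pos hμ hζ) hϑ
  set u : ℝ := Real.exp (-s) with hu
  have hu0 : 0 < u := Real.exp_pos _
  have hu1 : u ≤ 1 := by
    rw [hu, ← Real.exp_zero]
    exact Real.exp_le_exp.mpr (by linarith)
  have hexp : ∀ n : ℕ, Real.exp (-s * n) = u ^ n := fun n => by
    rw [hu, ← Real.exp_nat_mul]
    congr 1
    ring
  set g : ℕ → Ω → ℝ := fun n ω => u ^ n * fcpP μ ϑ ζ θ lam n (H ω) with hgdef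
  set c : ℕ → ℝ := fun m => risingFactorial ζ m * (lam * (u - 1)) ^ m /
      (m.factorial * Real.Gamma (μ * m + ϑ)) with hcdef
  set f : ℕ → Ω → ℝ := fun m ω => c m * H ω ^ ((m : ℝ) * θ) with hfdef
  -- measurability
  have hgm : ∀ n, Measurable (g n) := fun n =>
    ((fcpP_measurable hμ hμ1 hζ hϑ0 hθ.le n).comp hHm).const_mul (u ^ n)
  have hHp : ∀ m : ℕ, Measurable fun ω => H ω ^ ((m : ℝ) * θ) := fun m =>
    ((Real.continuous_rpow_const (by positivity)).measurable).comp hHm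
  have hfm : ∀ m, Measurable (f m) := fun m => (hHp m).const_mul _
  -- pointwise dominations
  have hgsum : ∀ ω, Summable fun n => |g n ω| := fun ω =>
    pm1 hμ hμ1 hζ hϑ0 hlam hu0 hu1 hθ (hH0 ω)
  have hgbound : ∀ ω, ∑' n, |g n ω|
      ≤ Real.Gamma ϑ * mittagLeffler μ ϑ ζ (2 * lam * H ω ^ θ) := fun ω =>
    pm_bound hμ hμ1 hζ hϑ0 hlam hu0 hu1 hθ (hH0 ω)
  -- finiteness for the n-family
  have hKaux : ∀ ω, ∑' n, (‖g n ω‖₊ : ℝ≥0∞)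
      ≤ ENNReal.ofReal (Real.Gamma ϑ * mittagLeffler μ ϑ ζ (2 * lam * H ω ^ θ)) := by
    intro ω
    have h1 : ∑' n, (‖g n ω‖₊ : ℝ≥0∞) = ENNReal.ofReal (∑' n, |g n ω|) := by
      rw [ENNReal.ofReal_tsum_of_nonneg (fun n => abs_nonneg _) (hgsum ω)]
      refine tsum_congr fun n => ?_
      rw [← Real.norm_eq_abs, ofReal_norm, enorm_eq_nnnorm]
    rw [h1]
    exact ENNReal.ofReal_le_ofReal (hgbound ω)
  have K : ∑' n, ∫⁻ ω, ‖g n ω‖₊ ∂P ≠ ⊤ := by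
    rw [← lintegral_tsum (fun n => (hgm n).nnnorm.coe_nnreal_ennreal.aemeasurable)]
    refine ne_top_of_le_ne_top ?_ (lintegral_mono hKaux)
    exact (hint.const_mul (Real.Gamma ϑ)).lintegral_lt_top.ne
  -- the n-sum equals the integrals
  have hzint : ∀ n : ℕ, Real.exp (-s * n) * z n = ∫ ω, g n ω ∂P := by
    intro n
    rw [hz n, hexp n, ← integral_const_mul]
  -- claim 1
  have hS1 : Summable fun n : ℕ => |Real.exp (-s * n) * z n| := by
    have hb : ∀ n : ℕ, |Real.exp (-s * n) * z n| ≤ (∫⁻ ω, ‖g n ω‖₊ ∂P).toReal := by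
      intro n
      rw [hzint n, ← Real.norm_eq_abs]
      calc ‖∫ ω, g n ω ∂P‖ ≤ ∫ ω, ‖g n ω‖ ∂P := norm_integral_le_integral_norm _
        _ = (∫⁻ ω, ‖g n ω‖₊ ∂P).toReal :=
            integral_norm_eq_lintegral_enorm (hgm n).aestronglyMeasurable
    exact Summable.of_nonneg_of_le (fun _ => abs_nonneg _) hb (ENNReal.summable_toReal K)
  -- finiteness for the m-family
  have hfb : ∀ m ω, ‖f m ω‖ ≤ risingFactorial ζ m * (2 * lam * H ω ^ θ) ^ m /
      (m.factorial * Real.Gamma (μ * m + ϑ)) := by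
    intro m ω
    have hΓ : (0:ℝ) < Real.Gamma (μ * m + ϑ) := Real.Gamma_pos_of_pos (by positivity)
    have hrp : (0:ℝ) ≤ H ω ^ ((m : ℝ) * θ) := Real.rpow_nonneg (hH0 ω) _
    have hcb : |c m| ≤ risingFactorial ζ m * (2 * lam) ^ m /
        (m.factorial * Real.Gamma (μ * m + ϑ)) := by
      rw [hcdef]
      simp only
      rw [abs_div, abs_mul, abs_pow, abs_of_pos (rf_pos hζ m),
        abs_of_pos (by positivity : (0:ℝ) < (m.factorial : ℝ) * Real.Gamma (μ * m + ϑ))]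
      have h1 : |lam * (u - 1)| ≤ 2 * lam := by
        rw [abs_mul, abs_of_pos hlam, abs_sub_comm, abs_of_nonneg (by linarith : (0:ℝ) ≤ 1 - u)]
        nlinarith
      have := pow_le_pow_left₀ (abs_nonneg _) h1 m
      have := rf_pos hζ m
      apply div_le_div_of_nonneg_right _ (by positivity)
      · exact mul_le_mul_of_nonneg_left (by assumption) (by positivity)
    have hpowsplit : (2 * lam * H ω ^ θ) ^ m = (2 * lam) ^ m * H ω ^ ((m : ℝ) * θ) := by
      rw [mul_pow]
      congr 1
      rw [← Real.rpow_natCast (H ω ^ θ) m, ← Real.rpow_mul (hH0 ω), mul_comm θ (m : ℝ)]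
    rw [Real.norm_eq_abs, hfdef]
    simp only
    rw [abs_mul, abs_of_nonneg hrp, hpowsplit]
    calc |c m| * H ω ^ ((m : ℝ) * θ)
        ≤ risingFactorial ζ m * (2 * lam) ^ m /
            (m.factorial * Real.Gamma (μ * m + ϑ)) * H ω ^ ((m : ℝ) * θ) :=
          mul_le_mul_of_nonneg_right hcb hrp
      _ = risingFactorial ζ m * ((2 * lam) ^ m * H ω ^ ((m : ℝ) * θ)) /
            (m.factorial * Real.Gamma (μ * m + ϑ)) := by ring
  have K2 : ∑' m, ∫⁻ ω, ‖f m ω‖₊ ∂P ≠ ⊤ := by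
    have hee : ∀ m, ∫⁻ ω, (‖f m ω‖₊ : ℝ≥0∞) ∂P ≤ ∫⁻ ω, ENNReal.ofReal
        (risingFactorial ζ m * (2 * lam * H ω ^ θ) ^ m /
          (m.factorial * Real.Gamma (μ * m + ϑ))) ∂P := by
      intro m
      refine lintegral_mono fun ω => ?_
      rw [← enorm_eq_nnnorm, ← ofReal_norm]
      exact ENNReal.ofReal_le_ofReal (hfb m ω)
    have hTm : ∀ m : ℕ, AEMeasurable (fun ω => ENNReal.ofReal
        (risingFactorial ζ m * (2 * lam * H ω ^ θ) ^ m /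
          (m.factorial * Real.Gamma (μ * m + ϑ)))) P := by
      intro m
      refine (ENNReal.measurable_ofReal.comp ?_).aemeasurable
      have : Measurable fun ω => 2 * lam * H ω ^ θ :=
        (((Real.continuous_rpow_const hθ.le).measurable).comp hHm).const_mul _
      exact ((this.pow_const m).const_mul _).div_const _
    have hML : ∀ ω, ∑' m : ℕ, ENNReal.ofReal
        (risingFactorial ζ m * (2 * lam * H ω ^ θ) ^ m /
          (m.factorial * Real.Gamma (μ * m + ϑ)))
        = ENNReal.ofReal (mittagLeffler μ ϑ ζ (2 * lam * H ω ^ θ)) := by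
      intro ω
      have hterm0 : ∀ m : ℕ, (0:ℝ) ≤ risingFactorial ζ m * (2 * lam * H ω ^ θ) ^ m /
          (m.factorial * Real.Gamma (μ * m + ϑ)) := by
        intro m
        have hΓ : (0:ℝ) < Real.Gamma (μ * m + ϑ) := Real.Gamma_pos_of_pos (by positivity)
        have := rf_pos hζ m
        have h2 : (0:ℝ) ≤ 2 * lam * H ω ^ θ := by
          have := Real.rpow_nonneg (hH0 ω) θ
          positivity
        positivity
      rw [mittagLeffler, ENNReal.ofReal_tsum_of_nonneg hterm0
        (ml_summable hμ hμ1 hζ hϑ0 (by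
          have := Real.rpow_nonneg (hH0 ω) θ
          positivity))]
    have hlt : ∑' m, ∫⁻ ω, ‖f m ω‖₊ ∂P < ⊤ := calc
      (∑' m, ∫⁻ ω, ‖f m ω‖₊ ∂P)
        ≤ ∑' m, ∫⁻ ω, ENNReal.ofReal (risingFactorial ζ m * (2 * lam * H ω ^ θ) ^ m /
            (m.factorial * Real.Gamma (μ * m + ϑ))) ∂P := ENNReal.tsum_le_tsum hee
      _ = ∫⁻ ω, ∑' m, ENNReal.ofReal (risingFactorial ζ m * (2 * lam * H ω ^ θ) ^ m /
            (m.factorial * Real.Gamma (μ * m + ϑ))) ∂P := (lintegral_tsum hTm).symm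
      _ = ∫⁻ ω, ENNReal.ofReal (mittagLeffler μ ϑ ζ (2 * lam * H ω ^ θ)) ∂P := by
          refine lintegral_congr fun ω => hML ω
      _ < ⊤ := hint.lintegral_lt_top
    exact hlt.ne
  -- claim 2
  have hfint : ∀ m, ∫ ω, f m ω ∂P = c m * ∫ ω, H ω ^ ((m : ℝ) * θ) ∂P := fun m =>
    integral_const_mul _ _
  have hS2 : Summable fun m : ℕ => |c m * ∫ ω, H ω ^ ((m : ℝ) * θ) ∂P| := by
    have hb : ∀ m, |c m * ∫ ω, H ω ^ ((m : ℝ) * θ) ∂P| ≤ (∫⁻ ω, ‖f m ω‖₊ ∂P).toReal := by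
      intro m
      rw [← hfint m, ← Real.norm_eq_abs]
      calc ‖∫ ω, f m ω ∂P‖ ≤ ∫ ω, ‖f m ω‖ ∂P := norm_integral_le_integral_norm _
        _ = (∫⁻ ω, ‖f m ω‖₊ ∂P).toReal :=
            integral_norm_eq_lintegral_enorm (hfm m).aestronglyMeasurable
    exact Summable.of_nonneg_of_le (fun _ => abs_nonneg _) hb (ENNReal.summable_toReal K2)
  -- main identity
  have hpt : ∀ ω, ∑' n, g n ω = Real.Gamma ϑ * ∑' m, f m ω := by
    intro ω
    rw [hgdef]
    simp only
    rw [pm2 hμ hμ1 hζ hϑ0 hlam hu0 hθ (hH0 ω), ← tsum_mul_left]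
    refine tsum_congr fun m => ?_
    rw [hfdef, hcdef]
    simp only
    ring
  have hmain : ∑' n : ℕ, Real.exp (-s * n) * z n
      = Real.Gamma ϑ * ∑' m, c m * ∫ ω, H ω ^ ((m : ℝ) * θ) ∂P := by
    calc ∑' n : ℕ, Real.exp (-s * n) * z n = ∑' n, ∫ ω, g n ω ∂P := tsum_congr hzint
      _ = ∫ ω, ∑' n, g n ω ∂P :=
          (integral_tsum (fun n => (hgm n).aestronglyMeasurable) K).symm
      _ = ∫ ω, Real.Gamma ϑ * ∑' m, f m ω ∂P := integral_congr_ae (Filter.Eventually.of_forall hpt)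
      _ = Real.Gamma ϑ * ∫ ω, ∑' m, f m ω ∂P := integral_const_mul _ _
      _ = Real.Gamma ϑ * ∑' m, ∫ ω, f m ω ∂P := by
          rw [integral_tsum (fun m => (hfm m).aestronglyMeasurable) K2]
      _ = Real.Gamma ϑ * ∑' m, c m * ∫ ω, H ω ^ ((m : ℝ) * θ) ∂P := by
          rw [tsum_congr hfint]
  exact ⟨hS1, hS2, hmain⟩
end
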